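/- arXiv:2308.08781 — 4 statements merged into one kernel-verified Lean document; each statement's English description precedes it below -/
import Mathlib

section
/- Let U be any unitary matrix in Matrix.unitaryGroup (Fin n) ℂ and X ∈ Matrix (Fin n) (Fin n) ℂ. Then the Cesàro averages S_r = (1/r) ∑_{i=0}^{r-1} U^i * X * (U^i)⁻¹ converge as r → ∞ to a limit L ∈ Matrix (Fin n) (Fin n) ℂ satisfying: (i) U * L = L * U, and (ii) for every matrix Y with U * Y = Y * U, trace((X - L)ᴴ * Y) = 0. That is, the asymptotic group average of X under conjugation by U is the orthogonal projection (with respect to the Frobenius inner product) of X onto the commutant of U. -/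
/-!
Conjugation `A ↦ U * A * Uᴴ` preserves the Frobenius inner product `trace (Aᴴ * B)`, which is
the Euclidean inner product of the entries, so it is a unitary operator on the Hilbert space of
matrices; its fixed points are exactly the commutant of `U`. The Cesàro averages in the statement
are its Birkhoff averages, so von Neumann's mean ergodic theorem makes them converge to the
orthogonal projection of `X` onto the fixed points.
-/

open Finset Filter Matrix

attribute [local instance] Matrix.normedAddCommGroup Matrix.normedSpace

open Topology InnerProductSpace

theorem Function.Semiconj.birkhoffAverage_apply {α β M : Type*} (R : Type*) [DivisionSemiring R]
    [AddCommMonoid M] [Module R M] {φ : α → β} {f : α → α} {f' : β → β}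
    (h : Function.Semiconj φ f f') (g : β → M) (n : ℕ) (x : α) :
    birkhoffAverage R f' g n (φ x) = birkhoffAverage R f (g ∘ φ) n x := by
  simp [birkhoffAverage, birkhoffSum, (h.iterate_right _).eq]

section MeanErgodic

variable {𝕜 E : Type*} [RCLike 𝕜] [NormedAddCommGroup E] [InnerProductSpace 𝕜 E] [CompleteSpace E]

theorem ContinuousLinearMap.exists_tendsto_birkhoffAverage_of_norm_le_one (f : E →L[𝕜] E)
    (hf : ‖f‖ ≤ 1) (x : E) :
    ∃ y, Tendsto (birkhoffAverage 𝕜 f _root_.id · x) atTop (𝓝 y) ∧ f y = y ∧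
      ∀ z, f z = z → ⟪x - y, z⟫_𝕜 = 0 := by
  set K := f.eqLocus (1 : E →L[𝕜] E)
  refine ⟨K.orthogonalProjectionOnto x, f.tendsto_birkhoffAverage_orthogonalProjection hf x,
    (K.orthogonalProjectionOnto x).2, fun z hz => ?_⟩
  exact inner_eq_zero_symm.mp <|
    (K.mem_orthogonal _).mp (K.sub_starProjection_mem_orthogonal x) z hz

theorem LinearMap.exists_tendsto_birkhoffAverage_of_inner_map_map {V : Type*} [AddCommGroup V]
    [Module 𝕜 V] [TopologicalSpace V] (e : V ≃L[𝕜] E) (T : V →ₗ[𝕜] V)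
    (hT : ∀ a b, ⟪e (T a), e (T b)⟫_𝕜 = ⟪e a, e b⟫_𝕜) (x : V) :
    ∃ L : V, Tendsto (fun n => birkhoffAverage 𝕜 T _root_.id n x) atTop (𝓝 L) ∧ T L = L ∧
      ∀ z, T z = z → ⟪e (x - L), e z⟫_𝕜 = 0 := by
  let f : E →ₗᵢ[𝕜] E := ((e : V ≃ₗ[𝕜] E).conj T).isometryOfInner fun a b => by
    simpa using hT (e.symm a) (e.symm b)
  have hfe : ∀ a, f (e a) = e (T a) := fun a => by simp [f]
  obtain ⟨y, hy, hfy, horth⟩ :=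
    f.toContinuousLinearMap.exists_tendsto_birkhoffAverage_of_norm_le_one
      f.norm_toContinuousLinearMap_le (e x)
  refine ⟨e.symm y, ?_, ?_, fun z hz => ?_⟩
  · have hsemi : Function.Semiconj e T f := fun a => (hfe a).symm
    refine ((e.symm.continuous.tendsto y).comp hy).congr fun n => ?_
    change e.symm (birkhoffAverage 𝕜 f _root_.id n (e x)) = _
    rw [hsemi.birkhoffAverage_apply 𝕜, map_birkhoffAverage 𝕜 𝕜]
    congr 1
    exact funext e.symm_apply_apply
  · apply e.injective
    simpa [← hfe] using hfy
  · simpa [hfe, hz] using horth (e z)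

end MeanErgodic

namespace Unitary

variable {S R : Type*} [Semiring R] [StarMul R] [SMul S R] [IsScalarTower S R R]
  [SMulCommClass S R R]

theorem iterate_conjStarAlgAut (u : unitary R) (k : ℕ) :
    (conjStarAlgAut S R u)^[k] = conjStarAlgAut S R (u ^ k) := by
  induction k with
  | zero => ext; simp
  | succ k ih =>
    rw [Function.iterate_succ', ih, pow_succ', map_mul]
    rfl

end Unitary

namespace Matrix

section Frobenius

variable (𝕜 m n : Type*) [RCLike 𝕜] [Fintype m] [Fintype n]

def frobeniusEuclideanEquiv : Matrix m n 𝕜 ≃ₗ[𝕜] EuclideanSpace 𝕜 (m × n) where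
  toFun A := WithLp.toLp 2 fun p => A p.1 p.2
  invFun x := of fun i j => x (i, j)
  map_add' _ _ := rfl
  map_smul' _ _ := rfl
  left_inv _ := rfl
  right_inv _ := rfl

variable {𝕜 m n}

theorem inner_frobeniusEuclideanEquiv (A B : Matrix m n 𝕜) :
    ⟪frobeniusEuclideanEquiv 𝕜 m n A, frobeniusEuclideanEquiv 𝕜 m n B⟫_𝕜 = trace (Aᴴ * B) := by
  simp only [PiLp.inner_apply, RCLike.inner_apply, frobeniusEuclideanEquiv,
    Fintype.sum_prod_type, trace, diag, mul_apply, conjTranspose_apply]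
  rw [Finset.sum_comm]
  exact sum_congr rfl fun _ _ => sum_congr rfl fun _ _ => mul_comm _ _

end Frobenius

variable {α n : Type*} [Fintype n] [DecidableEq n]

theorem trace_conjTranspose_conjStarAlgAut_mul_conjStarAlgAut [CommRing α] [StarRing α]
    (u : unitary (Matrix n n α)) (A B : Matrix n n α) :
    trace ((Unitary.conjStarAlgAut α _ u A)ᴴ * Unitary.conjStarAlgAut α _ u B) =
      trace (Aᴴ * B) := by
  simp only [Unitary.conjStarAlgAut_apply, ← star_eq_conjTranspose, star_mul, star_star]
  set V : Matrix n n α := ↑u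
  have hV : star V * V = 1 := Unitary.coe_star_mul_self u
  calc trace (V * (star A * star V) * (V * B * star V)) = trace (V * (star A * B) * star V) := by
        simp only [mul_assoc, ← mul_assoc (star V) V, hV, one_mul]
    _ = trace (star A * B) := by rw [trace_mul_cycle, hV, one_mul]

theorem birkhoffAverage_conjStarAlgAut [Field α] [StarRing α] (U : unitaryGroup n α)
    (X : Matrix n n α) (r : ℕ) :
    birkhoffAverage α (Unitary.conjStarAlgAut α _ U) id r X =
      (1 / (r : α)) • ∑ i ∈ range r, (U : Matrix n n α) ^ i * X * ((U : Matrix n n α) ^ i)⁻¹ := by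
  rw [birkhoffAverage, birkhoffSum, one_div]
  congr 1
  refine sum_congr rfl fun i _ => ?_
  have hinv : ((U : Matrix n n α) ^ i)⁻¹ = star ((U : Matrix n n α) ^ i) :=
    inv_eq_left_inv (by rw [← SubmonoidClass.coe_pow, Unitary.coe_star_mul_self])
  rw [id, Unitary.iterate_conjStarAlgAut, Unitary.conjStarAlgAut_apply, SubmonoidClass.coe_pow,
    hinv]

end Matrix

/-- For any unitary `U` and any matrix `X`, the Cesàro averages
`S_r = (1/r) ∑_{i=0}^{r-1} U^i * X * (U^i)⁻¹` converge as `r → ∞` to a limit `L` which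
(i) commutes with `U` and (ii) satisfies `trace((X - L)ᴴ * Y) = 0` for every `Y` commuting
with `U`; i.e. the asymptotic group average of `X` is the Frobenius-orthogonal projection
of `X` onto the commutant of `U`. -/
theorem cesaro_average_tendsto_commutant_projection {n : ℕ}
    (U : Matrix.unitaryGroup (Fin n) ℂ) (X : Matrix (Fin n) (Fin n) ℂ) :
    ∃ L : Matrix (Fin n) (Fin n) ℂ,
      Tendsto (fun r : ℕ => (1 / (r : ℂ)) • ∑ i ∈ Finset.range r,
          (U : Matrix (Fin n) (Fin n) ℂ) ^ i * X * (((U : Matrix (Fin n) (Fin n) ℂ)) ^ i)⁻¹)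
        atTop (nhds L) ∧
      (U : Matrix (Fin n) (Fin n) ℂ) * L = L * (U : Matrix (Fin n) (Fin n) ℂ) ∧
      (∀ Y : Matrix (Fin n) (Fin n) ℂ,
        (U : Matrix (Fin n) (Fin n) ℂ) * Y = Y * (U : Matrix (Fin n) (Fin n) ℂ) →
          Matrix.trace ((X - L)ᴴ * Y) = 0) := by
  let e := (frobeniusEuclideanEquiv ℂ (Fin n) (Fin n)).toContinuousLinearEquiv
  let T := (Unitary.conjStarAlgAut ℂ _ U).toAlgEquiv.toLinearMap
  have hT : ∀ A B, ⟪e (T A), e (T B)⟫_ℂ = ⟪e A, e B⟫_ℂ := fun A B => by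
    simpa [e, T, inner_frobeniusEuclideanEquiv] using
      trace_conjTranspose_conjStarAlgAut_mul_conjStarAlgAut U A B
  obtain ⟨L, hL, hfix, horth⟩ := T.exists_tendsto_birkhoffAverage_of_inner_map_map e hT X
  refine ⟨L, ?_, ?_, fun Y hY => ?_⟩
  · simpa [T, birkhoffAverage_conjStarAlgAut] using hL
  · exact (commute_unitary_iff_star_right_conjugate U.2).mpr hfix
  · rw [← inner_frobeniusEuclideanEquiv]
    exact horth Y ((commute_unitary_iff_star_right_conjugate U.2).mp hY)
end

section
/- Let A ∈ Matrix (Fin n) (Fin n) ℝ be symmetric (Aᵀ = A) and let P be a Moore–Penrose pseudoinverse of A. Let v ∈ Fin n → ℝ and suppose (1 - A * P).mulVec v = 0 (equivalently, v lies in the column space of A). Set x = P.mulVec v and β = 1 + vᵀ (P.mulVec v), and assume β ≠ 0. Then the matrix B = P - (1/β) • (x ⊗ xᵀ) (where x ⊗ xᵀ is the outer product Matrix.vecMulVec x x) is a Moore–Penrose pseudoinverse of the rank-one update A + Matrix.vecMulVec v v. -/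
open Matrix

/-- `P` is a Moore–Penrose pseudoinverse of `A`. -/
def IsMoorePenrose {n : ℕ} (A P : Matrix (Fin n) (Fin n) ℝ) : Prop :=
  A * P * A = A ∧ P * A * P = P ∧ (A * P)ᵀ = A * P ∧ (P * A)ᵀ = P * A

/-!
The pseudoinverse is unique, so the pseudoinverse `P` of a symmetric `A` is symmetric; with
`x = P v` this gives `A x = v` and `vᵀ P = xᵀ`. A Sherman–Morrison computation then shows that
the update changes neither projection: `(A + v vᵀ) B = A P` and `B (A + v vᵀ) = P A`. The four
Penrose equations for `A + v vᵀ` and `B` thus reduce to those for `A` and `P`.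
-/

namespace Matrix

variable {K m n : Type*} [Field K]

theorem add_vecMulVec_mul_sub_smul_vecMulVec [Fintype n] (A : Matrix m n K) (P : Matrix n m K)
    {u y : m → K} {w x : n → K} (hAx : A *ᵥ x = u) (hwP : w ᵥ* P = y)
    (hβ : 1 + w ⬝ᵥ x ≠ 0) :
    (A + vecMulVec u w) * (P - (1 + w ⬝ᵥ x)⁻¹ • vecMulVec x y) = A * P := by
  have hc : (1 + w ⬝ᵥ x)⁻¹ + (1 + w ⬝ᵥ x)⁻¹ * (w ⬝ᵥ x) = 1 := by
    field_simp
  rw [Matrix.add_mul, Matrix.mul_sub, Matrix.mul_sub, Matrix.mul_smul, Matrix.mul_smul,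
    mul_vecMulVec, hAx, vecMulVec_mul, hwP, vecMulVec_mul_vecMulVec, vecMulVec_smul, smul_smul]
  linear_combination (norm := module) (-hc) • vecMulVec u y

theorem sub_smul_vecMulVec_mul_add_vecMulVec [Fintype m] (A : Matrix m n K) (P : Matrix n m K)
    {u y : m → K} {w x : n → K} (hPu : P *ᵥ u = x) (hyA : y ᵥ* A = w)
    (hβ : 1 + u ⬝ᵥ y ≠ 0) :
    (P - (1 + u ⬝ᵥ y)⁻¹ • vecMulVec x y) * (A + vecMulVec u w) = P * A := by
  apply transpose_injective
  simp only [transpose_mul, transpose_add, transpose_sub, transpose_smul, transpose_vecMulVec]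
  exact add_vecMulVec_mul_sub_smul_vecMulVec Aᵀ Pᵀ (by rwa [mulVec_transpose])
    (by rwa [vecMul_transpose]) hβ

end Matrix

namespace IsMoorePenrose

variable {n : ℕ} {A P Q : Matrix (Fin n) (Fin n) ℝ}

theorem transpose (hP : IsMoorePenrose A P) : IsMoorePenrose Aᵀ Pᵀ := by
  obtain ⟨hAPA, hPAP, hAP, hPA⟩ := hP
  refine ⟨?_, ?_, ?_, ?_⟩
  · rw [← transpose_mul, ← transpose_mul, ← Matrix.mul_assoc, hAPA]
  · rw [← transpose_mul, ← transpose_mul, ← Matrix.mul_assoc, hPAP]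
  · rw [← transpose_mul, hPA, hPA]
  · rw [← transpose_mul, hAP, hAP]

theorem mul_left_eq (hP : IsMoorePenrose A P) (hQ : IsMoorePenrose A Q) : A * P = A * Q :=
  calc A * P = (A * Q * (A * P))ᵀ := by rw [← Matrix.mul_assoc, hQ.1, hP.2.2.1]
    _ = A * P * (A * Q) := by rw [transpose_mul, hP.2.2.1, hQ.2.2.1]
    _ = A * Q := by rw [← Matrix.mul_assoc, hP.1]

theorem mul_right_eq (hP : IsMoorePenrose A P) (hQ : IsMoorePenrose A Q) : P * A = Q * A :=
  calc P * A = (P * A * (Q * A))ᵀ := by rw [Matrix.mul_assoc, ← Matrix.mul_assoc A, hQ.1,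
        hP.2.2.2]
    _ = Q * A * (P * A) := by rw [transpose_mul, hP.2.2.2, hQ.2.2.2]
    _ = Q * A := by rw [Matrix.mul_assoc, ← Matrix.mul_assoc A, hP.1]

theorem unique (hP : IsMoorePenrose A P) (hQ : IsMoorePenrose A Q) : P = Q :=
  calc P = P * A * P := hP.2.1.symm
    _ = Q * A * Q := by rw [Matrix.mul_assoc, hP.mul_left_eq hQ, ← Matrix.mul_assoc,
        hP.mul_right_eq hQ]
    _ = Q := hQ.2.1

theorem transpose_eq_self (hA : Aᵀ = A) (hP : IsMoorePenrose A P) : Pᵀ = P :=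
  (hA ▸ hP.transpose).unique hP

theorem of_mul_eq {M B : Matrix (Fin n) (Fin n) ℝ} (hP : IsMoorePenrose A P)
    (hMB : M * B = A * P) (hBM : B * M = P * A) (hM : A * P * M = M) (hB : P * A * B = B) :
    IsMoorePenrose M B := by
  refine ⟨?_, ?_, ?_, ?_⟩
  · rw [hMB, hM]
  · rw [hBM, hB]
  · rw [hMB, hP.2.2.1]
  · rw [hBM, hP.2.2.2]

end IsMoorePenrose

/-- Rank-one pseudoinverse update (case `y = 0`, `β ≠ 0`): if `A` is symmetric with
pseudoinverse `P`, `v` lies in the column space of `A` (i.e. `(1 - A*P).mulVec v = 0`), and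
`β = 1 + vᵀ (P v) ≠ 0`, then `P - (1/β) • x xᵀ` with `x = P v` is a Moore–Penrose
pseudoinverse of `A + v vᵀ`. -/
theorem pinv_rank_one_update_in_range {n : ℕ} (A P : Matrix (Fin n) (Fin n) ℝ)
    (hA : Aᵀ = A) (hP : IsMoorePenrose A P) (v : Fin n → ℝ)
    (hv : (1 - A * P).mulVec v = 0)
    (hβ : 1 + v ⬝ᵥ P.mulVec v ≠ 0) :
    IsMoorePenrose (A + Matrix.vecMulVec v v)
      (P - (1 / (1 + v ⬝ᵥ P.mulVec v)) •
        Matrix.vecMulVec (P.mulVec v) (P.mulVec v)) := by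
  have hAPv : A *ᵥ (P *ᵥ v) = v := by
    rw [sub_mulVec, one_mulVec, sub_eq_zero] at hv
    rw [mulVec_mulVec, ← hv]
  have hvP : v ᵥ* P = P *ᵥ v := by rw [← mulVec_transpose, hP.transpose_eq_self hA]
  have hPvA : (P *ᵥ v) ᵥ* A = v := by rw [← mulVec_transpose, hA, hAPv]
  rw [one_div]
  refine hP.of_mul_eq (add_vecMulVec_mul_sub_smul_vecMulVec A P hAPv hvP hβ)
    (sub_smul_vecMulVec_mul_add_vecMulVec A P rfl hPvA hβ) ?_ ?_
  · rw [mul_add, hP.1, mul_vecMulVec, ← mulVec_mulVec, hAPv]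
  · rw [mul_sub, Matrix.mul_smul, hP.2.1, mul_vecMulVec, mulVec_mulVec, hP.2.1]
end

section
/- Let A ∈ Matrix (Fin n) (Fin n) ℝ be symmetric positive semi-definite and let v ∈ Fin n → ℝ. Then: (i) if v does not lie in the range of A.mulVec, then (A + Matrix.vecMulVec v v).rank = A.rank + 1; (ii) if v lies in the range of A.mulVec, then (A + Matrix.vecMulVec v v).rank = A.rank. -/
/-!
For positive semi-definite `A` and `B`, `(A + B) x = 0` forces `x* A x = x* B x = 0`, hence
`A x = B x = 0`. So `A + B` has the same kernel, and therefore the same rank, as the stacked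
matrix `[A; B]`, whose conjugate transpose is `[A B]` because `A` and `B` are Hermitian; the
column space of `[A B]` is `range A ⊔ range B`. For `B = v vᵀ` this is `range A ⊔ span {v}`.
-/

open Matrix Module Submodule
open scoped ComplexOrder

namespace Matrix

section CommRing

variable {m n p R : Type*} [CommRing R]

theorem ker_mulVecLin_fromRows [Fintype n] (A : Matrix m n R) (B : Matrix p n R) :
    LinearMap.ker (fromRows A B).mulVecLin =
      LinearMap.ker A.mulVecLin ⊓ LinearMap.ker B.mulVecLin := by
  ext x
  simp [← Sum.elim_zero_zero, Sum.elim_eq_iff]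

theorem range_mulVecLin_fromCols [Fintype m] [Fintype p] (A : Matrix n m R) (B : Matrix n p R) :
    LinearMap.range (fromCols A B).mulVecLin =
      LinearMap.range A.mulVecLin ⊔ LinearMap.range B.mulVecLin := by
  apply le_antisymm
  · rintro _ ⟨x, rfl⟩
    rw [mulVecLin_apply, fromCols_mulVec]
    exact add_mem_sup ⟨_, rfl⟩ ⟨_, rfl⟩
  · refine sup_le ?_ ?_ <;> rintro _ ⟨x, rfl⟩
    · exact ⟨Sum.elim x 0, by simp⟩
    · exact ⟨Sum.elim 0 x, by simp⟩

end CommRing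

theorem rank_eq_rank_of_ker_mulVecLin_eq {m n p K : Type*} [Field K] [Fintype n]
    {A : Matrix m n K} {B : Matrix p n K}
    (h : LinearMap.ker A.mulVecLin = LinearMap.ker B.mulVecLin) : A.rank = B.rank := by
  have hA := LinearMap.finrank_range_add_finrank_ker A.mulVecLin
  have hB := LinearMap.finrank_range_add_finrank_ker B.mulVecLin
  rw [h] at hA
  unfold rank
  omega

theorem range_mulVecLin_vecMulVec_self {n K : Type*} [Field K] [LinearOrder K]
    [IsStrictOrderedRing K] [Fintype n] (v : n → K) :
    LinearMap.range (vecMulVec v v).mulVecLin = span K {v} := by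
  apply le_antisymm
  · rintro _ ⟨x, rfl⟩
    rw [mulVecLin_apply, vecMulVec_mulVec, op_smul_eq_smul]
    exact smul_mem _ _ (mem_span_singleton_self v)
  · rw [span_singleton_le_iff_mem]
    rcases eq_or_ne v 0 with rfl | hv
    · exact zero_mem _
    refine ⟨(v ⬝ᵥ v)⁻¹ • v, ?_⟩
    rw [mulVecLin_apply, mulVec_smul, vecMulVec_mulVec, op_smul_eq_smul, smul_smul,
      inv_mul_cancel₀ (dotProduct_self_eq_zero.not.2 hv), one_smul]

namespace PosSemidef

variable {n 𝕜 : Type*} [RCLike 𝕜] [Fintype n] {A B : Matrix n n 𝕜}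

theorem ker_mulVecLin_add (hA : A.PosSemidef) (hB : B.PosSemidef) :
    LinearMap.ker (A + B).mulVecLin = LinearMap.ker A.mulVecLin ⊓ LinearMap.ker B.mulVecLin := by
  ext x
  simp only [LinearMap.mem_ker, mem_inf, mulVecLin_apply]
  refine ⟨fun h => ?_, fun ⟨hAx, hBx⟩ => by rw [add_mulVec, hAx, hBx, add_zero]⟩
  have hsum : star x ⬝ᵥ A *ᵥ x + star x ⬝ᵥ B *ᵥ x = 0 := by
    rw [← dotProduct_add, ← add_mulVec, h, dotProduct_zero]
  obtain ⟨hAx, hBx⟩ := (add_eq_zero_iff_of_nonneg (hA.dotProduct_mulVec_nonneg x)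
    (hB.dotProduct_mulVec_nonneg x)).1 hsum
  exact ⟨(hA.dotProduct_mulVec_zero_iff x).1 hAx, (hB.dotProduct_mulVec_zero_iff x).1 hBx⟩

theorem rank_add_eq_finrank_range_sup (hA : A.PosSemidef) (hB : B.PosSemidef) :
    (A + B).rank = finrank 𝕜 ↥(LinearMap.range A.mulVecLin ⊔ LinearMap.range B.mulVecLin) :=
  calc (A + B).rank = (fromRows A B).rank := by
        apply rank_eq_rank_of_ker_mulVecLin_eq
        rw [hA.ker_mulVecLin_add hB, ker_mulVecLin_fromRows]
    _ = (fromCols A B).rank := by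
        rw [← rank_conjTranspose, conjTranspose_fromRows_eq_fromCols_conjTranspose, hA.1.eq,
          hB.1.eq]
    _ = finrank 𝕜 ↥(LinearMap.range A.mulVecLin ⊔ LinearMap.range B.mulVecLin) := by
        rw [rank, range_mulVecLin_fromCols]

end PosSemidef

end Matrix

/-- Rank of a rank-one update of a symmetric positive semi-definite matrix: adding `v vᵀ`
increases the rank by one exactly when `v` is outside the column space of `A`, and leaves
the rank unchanged when `v` is in the column space of `A`. -/
theorem rank_add_vecMulVec_self {n : ℕ} (A : Matrix (Fin n) (Fin n) ℝ)
    (hA : A.PosSemidef) (v : Fin n → ℝ) :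
    (v ∉ LinearMap.range A.mulVecLin →
      (A + Matrix.vecMulVec v v).rank = A.rank + 1) ∧
    (v ∈ LinearMap.range A.mulVecLin →
      (A + Matrix.vecMulVec v v).rank = A.rank) := by
  have hrank :
      (A + vecMulVec v v).rank = finrank ℝ ↥(LinearMap.range A.mulVecLin ⊔ span ℝ {v}) := by
    rw [hA.rank_add_eq_finrank_range_sup (by simpa using posSemidef_vecMulVec_self_star v),
      range_mulVecLin_vecMulVec_self]
  refine ⟨fun hv => ?_, fun hv => ?_⟩
  · rw [hrank, finrank_sup_span_singleton hv, rank]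
  · rw [hrank, sup_eq_left.2 ((span_singleton_le_iff_mem _ _).2 hv), rank]
end

section
/- (Golub–Klema–Stewart bound.) Let A ∈ Matrix (Fin m) (Fin n) ℝ have rank r̃ ≥ 1, and suppose A = U * Σ * Vᵀ is a singular value decomposition: U ∈ Matrix (Fin m) (Fin m) ℝ and V ∈ Matrix (Fin n) (Fin n) ℝ are orthogonal, and Σ ∈ Matrix (Fin m) (Fin n) ℝ vanishes off the diagonal with diagonal entries σ₁ ≥ σ₂ ≥ ... ≥ 0, exactly r̃ of which are nonzero. Let P ∈ Matrix (Fin n) (Fin n) ℝ be a permutation matrix, write A * P = [B₁ B₂] where B₁ consists of the first r̃ columns of A * P, and write Pᵀ * V in block form with top-left r̃ × r̃ block Ṽ₁₁, assumed invertible. Then σ_r̃(A) / ‖Ṽ₁₁⁻¹‖₂ ≤ σ_r̃(B₁) ≤ σ_r̃(A), where σ_r̃(A) = σ_{r̃} is the r̃-th largest singular value of A, σ_r̃(B₁) is the smallest singular value of B₁ (i.e., the infimum of ‖B₁.mulVec x‖ over unit vectors x ∈ Fin r̃ → ℝ), and ‖·‖₂ is the spectral norm (the supremum of ‖M.mulVec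 x‖ over unit vectors x); in particular B₁ has full column rank r̃. -/
open Matrix Finset

/-- Euclidean norm of a vector in `Fin k → ℝ`. -/
noncomputable def euclNorm {k : ℕ} (v : Fin k → ℝ) : ℝ :=
  Real.sqrt (∑ i, v i ^ 2)

/-- Spectral norm of a real matrix: supremum of `‖M x‖` over Euclidean-unit vectors `x`. -/
noncomputable def specNorm {m k : ℕ} (M : Matrix (Fin m) (Fin k) ℝ) : ℝ :=
  sSup {c | ∃ x : Fin k → ℝ, euclNorm x = 1 ∧ c = euclNorm (M.mulVec x)}

/-- Smallest singular value of a real matrix: infimum of `‖M x‖` over Euclidean-unit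
vectors `x`. -/
noncomputable def minSingVal {m k : ℕ} (M : Matrix (Fin m) (Fin k) ℝ) : ℝ :=
  sInf {c | ∃ x : Fin k → ℝ, euclNorm x = 1 ∧ c = euclNorm (M.mulVec x)}


/-!
Let `E` be the matrix selecting the first `rr` coordinates and `D = diag(σ₁, …, σ_rr)`. Then
`B₁ = A P E = (U E) D Ṽ₁₁ᵀ`, and `U E` has orthonormal columns, so it changes neither the norms
`‖B₁ x‖` nor the rank. The lower bound follows from `‖D y‖ ≥ σ_rr ‖y‖` and
`‖x‖ ≤ ‖Ṽ₁₁⁻¹‖₂ ‖Ṽ₁₁ᵀ x‖`. For the upper bound test `x = Ṽ₁₁⁻ᵀ e_rr`, which gives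
`‖B₁ x‖ = σ_rr`; since `Ṽ₁₁` is a square block of the orthogonal matrix `Pᵀ V`, `‖Ṽ₁₁ᵀ‖₂ ≤ 1`,
hence `‖x‖ ≥ ‖e_rr‖ = 1`.
-/

open scoped Matrix.Norms.L2Operator

lemma euclNorm_eq_norm {k : ℕ} (v : Fin k → ℝ) :
    euclNorm v = ‖(WithLp.toLp 2 v : EuclideanSpace ℝ (Fin k))‖ := by
  simp [euclNorm, EuclideanSpace.norm_eq]

lemma euclNorm_nonneg {k : ℕ} (v : Fin k → ℝ) : 0 ≤ euclNorm v := Real.sqrt_nonneg _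

lemma euclNorm_eq_sqrt_dotProduct {k : ℕ} (v : Fin k → ℝ) : euclNorm v = √(v ⬝ᵥ v) := by
  simp [euclNorm, dotProduct, sq]

lemma euclNorm_smul {k : ℕ} (a : ℝ) (v : Fin k → ℝ) : euclNorm (a • v) = |a| * euclNorm v := by
  simp [euclNorm_eq_norm, norm_smul]

lemma euclNorm_single {k : ℕ} (i : Fin k) (a : ℝ) : euclNorm (Pi.single i a) = |a| := by
  simp [euclNorm_eq_norm]

lemma euclNorm_mulVec_of_transpose_mul_self {m k : ℕ} {Q : Matrix (Fin m) (Fin k) ℝ}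
    (hQ : Qᵀ * Q = 1) (x : Fin k → ℝ) : euclNorm (Q *ᵥ x) = euclNorm x := by
  rw [euclNorm_eq_sqrt_dotProduct, euclNorm_eq_sqrt_dotProduct, dotProduct_mulVec,
    ← mulVec_transpose, mulVec_mulVec, hQ, one_mulVec]

lemma mul_euclNorm_le_euclNorm_diagonal_mulVec {k : ℕ} {s : Fin k → ℝ} {c : ℝ} (hc : 0 ≤ c)
    (hs : ∀ i, c ≤ s i) (y : Fin k → ℝ) : c * euclNorm y ≤ euclNorm (diagonal s *ᵥ y) := by
  rw [euclNorm, euclNorm, ← Real.sqrt_sq hc, ← Real.sqrt_mul (sq_nonneg c), mul_sum]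
  gcongr with i
  rw [mulVec_diagonal, mul_pow]
  gcongr
  exact hs i

lemma specNorm_eq_l2_opNorm {m k : ℕ} (M : Matrix (Fin m) (Fin k) ℝ) : specNorm M = ‖M‖ := by
  rw [l2_opNorm_def, ← ContinuousLinearMap.sSup_sphere_eq_norm, specNorm]
  congr 1
  ext c
  simp only [Set.mem_ofPred_eq, Set.mem_image, mem_sphere_zero_iff_norm]
  constructor
  · rintro ⟨x, hx, rfl⟩
    exact ⟨WithLp.toLp 2 x, by rwa [← euclNorm_eq_norm], by simp [euclNorm_eq_norm]⟩
  · rintro ⟨x, hx, rfl⟩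
    exact ⟨x.ofLp, by rwa [euclNorm_eq_norm], by simp [euclNorm_eq_norm, toLpLin_apply]⟩

lemma specNorm_nonneg {m k : ℕ} (M : Matrix (Fin m) (Fin k) ℝ) : 0 ≤ specNorm M :=
  specNorm_eq_l2_opNorm M ▸ norm_nonneg M

lemma specNorm_transpose {m k : ℕ} (M : Matrix (Fin m) (Fin k) ℝ) : specNorm Mᵀ = specNorm M := by
  rw [specNorm_eq_l2_opNorm, specNorm_eq_l2_opNorm, ← conjTranspose_eq_transpose_of_trivial,
    l2_opNorm_conjTranspose]

lemma euclNorm_mulVec_le {m k : ℕ} (M : Matrix (Fin m) (Fin k) ℝ) (x : Fin k → ℝ) :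
    euclNorm (M *ᵥ x) ≤ specNorm M * euclNorm x := by
  simpa [euclNorm_eq_norm, specNorm_eq_l2_opNorm] using M.l2_opNorm_mulVec (WithLp.toLp 2 x)

lemma specNorm_le_of_forall {m k : ℕ} {M : Matrix (Fin m) (Fin k) ℝ} {c : ℝ} (hc : 0 ≤ c)
    (h : ∀ x, euclNorm (M *ᵥ x) ≤ c * euclNorm x) : specNorm M ≤ c := by
  rw [specNorm_eq_l2_opNorm, l2_opNorm_def]
  refine ContinuousLinearMap.opNorm_le_bound _ hc fun x => ?_
  simpa [euclNorm_eq_norm, toLpLin_apply] using h x.ofLp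

lemma specNorm_le_one_of_transpose_mul_self {m k : ℕ} {Q : Matrix (Fin m) (Fin k) ℝ}
    (hQ : Qᵀ * Q = 1) : specNorm Q ≤ 1 :=
  specNorm_le_of_forall zero_le_one fun x => by
    rw [euclNorm_mulVec_of_transpose_mul_self hQ, one_mul]

lemma euclNorm_transpose_mul_mulVec_le {n k : ℕ} {Q R : Matrix (Fin n) (Fin k) ℝ}
    (hQ : Qᵀ * Q = 1) (hR : Rᵀ * R = 1) (v : Fin k → ℝ) :
    euclNorm ((Qᵀ * R) *ᵥ v) ≤ euclNorm v :=
  calc euclNorm ((Qᵀ * R) *ᵥ v) ≤ specNorm Qᵀ * euclNorm (R *ᵥ v) := by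
        rw [← mulVec_mulVec]; exact euclNorm_mulVec_le _ _
    _ ≤ 1 * euclNorm v := by
        rw [specNorm_transpose, euclNorm_mulVec_of_transpose_mul_self hR]
        exact mul_le_mul_of_nonneg_right (specNorm_le_one_of_transpose_mul_self hQ)
          (euclNorm_nonneg v)
    _ = euclNorm v := one_mul _

lemma minSingVal_nonneg {m k : ℕ} (M : Matrix (Fin m) (Fin k) ℝ) : 0 ≤ minSingVal M :=
  Real.sInf_nonneg fun _ ⟨_, _, hc⟩ => hc ▸ euclNorm_nonneg _

lemma minSingVal_mul_euclNorm_le {m k : ℕ} (M : Matrix (Fin m) (Fin k) ℝ) (x : Fin k → ℝ) :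
    minSingVal M * euclNorm x ≤ euclNorm (M *ᵥ x) := by
  rcases (euclNorm_nonneg x).eq_or_lt with hx | hx
  · rw [← hx, mul_zero]; exact euclNorm_nonneg _
  have hunit : euclNorm ((euclNorm x)⁻¹ • x) = 1 := by
    rw [euclNorm_smul, abs_of_pos (inv_pos.2 hx), inv_mul_cancel₀ hx.ne']
  have hle : minSingVal M ≤ euclNorm (M *ᵥ ((euclNorm x)⁻¹ • x)) :=
    csInf_le ⟨0, fun _ ⟨_, _, hc⟩ => hc ▸ euclNorm_nonneg _⟩ ⟨_, hunit, rfl⟩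
  rw [mulVec_smul, euclNorm_smul, abs_of_pos (inv_pos.2 hx)] at hle
  rwa [← le_div_iff₀ hx, div_eq_inv_mul]

lemma le_minSingVal {m k : ℕ} [NeZero k] {M : Matrix (Fin m) (Fin k) ℝ} {c : ℝ}
    (h : ∀ x, euclNorm x = 1 → c ≤ euclNorm (M *ᵥ x)) : c ≤ minSingVal M := by
  refine le_csInf ⟨_, Pi.single 0 1, ?_, rfl⟩ fun _ ⟨x, hx, hc⟩ => hc ▸ h x hx
  simp [euclNorm_eq_norm]

lemma minSingVal_mul_of_transpose_mul_self {m m' k : ℕ} {Q : Matrix (Fin m') (Fin m) ℝ}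
    (hQ : Qᵀ * Q = 1) (M : Matrix (Fin m) (Fin k) ℝ) : minSingVal (Q * M) = minSingVal M := by
  simp only [minSingVal, ← mulVec_mulVec, euclNorm_mulVec_of_transpose_mul_self hQ]

lemma rank_mul_of_transpose_mul_self {m m' k : ℕ} {Q : Matrix (Fin m') (Fin m) ℝ}
    (hQ : Qᵀ * Q = 1) (M : Matrix (Fin m) (Fin k) ℝ) : (Q * M).rank = M.rank := by
  refine le_antisymm (rank_mul_le_right _ _) ?_
  calc M.rank = (Qᵀ * (Q * M)).rank := by rw [← Matrix.mul_assoc, hQ, Matrix.one_mul]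
    _ ≤ (Q * M).rank := rank_mul_le_right _ _

section DiagonalMul

variable {k : ℕ} {s : Fin k → ℝ} {C : Matrix (Fin k) (Fin k) ℝ}

lemma div_specNorm_inv_le_minSingVal_diagonal_mul [NeZero k] {c : ℝ} (hc : 0 ≤ c)
    (hs : ∀ i, c ≤ s i) (hC : IsUnit C) : c / specNorm C⁻¹ ≤ minSingVal (diagonal s * C) := by
  refine le_minSingVal fun x hx => div_le_of_le_mul₀ (specNorm_nonneg _) (euclNorm_nonneg _) ?_
  have hx' : euclNorm x ≤ specNorm C⁻¹ * euclNorm (C *ᵥ x) := by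
    simpa [mulVec_mulVec, nonsing_inv_mul C ((isUnit_iff_isUnit_det C).1 hC)]
      using euclNorm_mulVec_le C⁻¹ (C *ᵥ x)
  calc c = c * euclNorm x := by rw [hx, mul_one]
    _ ≤ c * (specNorm C⁻¹ * euclNorm (C *ᵥ x)) := by gcongr
    _ = specNorm C⁻¹ * (c * euclNorm (C *ᵥ x)) := by ring
    _ ≤ specNorm C⁻¹ * euclNorm (diagonal s *ᵥ (C *ᵥ x)) := by
        gcongr
        · exact specNorm_nonneg _
        · exact mul_euclNorm_le_euclNorm_diagonal_mulVec hc hs _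
    _ = euclNorm ((diagonal s * C) *ᵥ x) * specNorm C⁻¹ := by rw [mulVec_mulVec, mul_comm]

lemma minSingVal_diagonal_mul_le (hC : IsUnit C) (hC₁ : ∀ v, euclNorm (C *ᵥ v) ≤ euclNorm v)
    (i : Fin k) : minSingVal (diagonal s * C) ≤ |s i| := by
  set x := C⁻¹ *ᵥ Pi.single i 1
  have hCx : C *ᵥ x = Pi.single i 1 := by
    rw [mulVec_mulVec, mul_nonsing_inv C ((isUnit_iff_isUnit_det C).1 hC), one_mulVec]
  have hx : 1 ≤ euclNorm x := by simpa [hCx, euclNorm_single] using hC₁ x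
  calc minSingVal (diagonal s * C) ≤ minSingVal (diagonal s * C) * euclNorm x :=
        le_mul_of_one_le_right (minSingVal_nonneg _) hx
    _ ≤ euclNorm ((diagonal s * C) *ᵥ x) := minSingVal_mul_euclNorm_le _ _
    _ = |s i| := by
        rw [← mulVec_mulVec, hCx, mulVec_single_one]
        simp [euclNorm_single]

end DiagonalMul

lemma transpose_mul_self_mul_of_mem_orthogonalGroup {m k : ℕ} {U : Matrix (Fin m) (Fin m) ℝ}
    (hU : U ∈ orthogonalGroup (Fin m) ℝ) {Q : Matrix (Fin m) (Fin k) ℝ} (hQ : Qᵀ * Q = 1) :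
    (U * Q)ᵀ * (U * Q) = 1 := by
  rw [transpose_mul, Matrix.mul_assoc, ← Matrix.mul_assoc Uᵀ, (mem_orthogonalGroup_iff' ..).1 hU,
    Matrix.one_mul, hQ]

lemma permMatrix_mem_orthogonalGroup {n : ℕ} (σ : Equiv.Perm (Fin n)) :
    σ.permMatrix ℝ ∈ orthogonalGroup (Fin n) ℝ := by
  rw [mem_orthogonalGroup_iff, transpose_permMatrix, ← permMatrix_mul, inv_mul_cancel,
    permMatrix_one]

section InclMatrix

variable {a b : ℕ} (h : a ≤ b)

def inclMatrix : Matrix (Fin b) (Fin a) ℝ :=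
  (1 : Matrix (Fin b) (Fin b) ℝ).submatrix id (Fin.castLE h)

lemma submatrix_castLE_eq_mul_inclMatrix {m : ℕ} (M : Matrix (Fin m) (Fin b) ℝ) :
    M.submatrix id (Fin.castLE h) = M * inclMatrix h :=
  (mul_submatrix_one (Equiv.refl _) _ M).symm

lemma submatrix_castLE_castLE_eq (M : Matrix (Fin b) (Fin b) ℝ) :
    M.submatrix (Fin.castLE h) (Fin.castLE h) = (inclMatrix h)ᵀ * M * inclMatrix h := by
  have hrows : M.submatrix (Fin.castLE h) id = (inclMatrix h)ᵀ * M := by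
    rw [← transpose_transpose (M.submatrix _ _), transpose_submatrix,
      submatrix_castLE_eq_mul_inclMatrix, transpose_mul, transpose_transpose]
  rw [← hrows, ← submatrix_castLE_eq_mul_inclMatrix, submatrix_submatrix]
  rfl

lemma inclMatrix_transpose_mul_self : (inclMatrix h)ᵀ * inclMatrix h = 1 := by
  rw [← Matrix.mul_one (inclMatrix h)ᵀ, ← submatrix_castLE_castLE_eq,
    submatrix_one _ (Fin.castLE_injective h)]

lemma euclNorm_submatrix_castLE_mulVec_le {W : Matrix (Fin b) (Fin b) ℝ}
    (hW : W ∈ orthogonalGroup (Fin b) ℝ) (v : Fin a → ℝ) :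
    euclNorm (W.submatrix (Fin.castLE h) (Fin.castLE h) *ᵥ v) ≤ euclNorm v := by
  rw [submatrix_castLE_castLE_eq, Matrix.mul_assoc]
  exact euclNorm_transpose_mul_mulVec_le (inclMatrix_transpose_mul_self h)
    (transpose_mul_self_mul_of_mem_orthogonalGroup hW (inclMatrix_transpose_mul_self h)) v

end InclMatrix

lemma eq_inclMatrix_mul_diagonal_mul_transpose {m n r : ℕ} (hm : r ≤ m) (hn : r ≤ n)
    {S : Matrix (Fin m) (Fin n) ℝ} {d : ℕ → ℝ}
    (hS : ∀ i j, S i j = if (i : ℕ) = (j : ℕ) then d i else 0) (hd : ∀ i, r ≤ i → d i = 0) :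
    S = inclMatrix hm * diagonal (fun i : Fin r => d i) * (inclMatrix hn)ᵀ := by
  ext i j
  rw [mul_apply]
  simp only [mul_diagonal, transpose_apply, inclMatrix, submatrix_apply, id, one_apply, hS,
    Fin.ext_iff, Fin.val_castLE]
  by_cases hi : (i : ℕ) < r
  · rw [Finset.sum_eq_single ⟨i, hi⟩
      (fun k _ hk => by rw [if_neg (Fin.val_ne_of_ne hk).symm]; ring) (by simp)]
    simp [eq_comm]
  · rw [Finset.sum_eq_zero fun k _ => by rw [if_neg (by omega)]; ring]
    simp [hd _ (not_lt.1 hi)]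

lemma svd_submatrix_castLE_eq {m n r : ℕ} (hm : r ≤ m) (hn : r ≤ n)
    (U : Matrix (Fin m) (Fin m) ℝ) (S : Matrix (Fin m) (Fin n) ℝ) (V P : Matrix (Fin n) (Fin n) ℝ)
    {d : ℕ → ℝ} (hS : ∀ i j, S i j = if (i : ℕ) = (j : ℕ) then d i else 0)
    (hd : ∀ i, r ≤ i → d i = 0) :
    (U * S * Vᵀ * P).submatrix id (Fin.castLE hn) = (U * inclMatrix hm) *
      (diagonal (fun i : Fin r => d i) * ((Pᵀ * V).submatrix (Fin.castLE hn) (Fin.castLE hn))ᵀ) := by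
  rw [submatrix_castLE_eq_mul_inclMatrix, eq_inclMatrix_mul_diagonal_mul_transpose hm hn hS hd,
    submatrix_castLE_castLE_eq]
  simp only [transpose_mul, transpose_transpose, Matrix.mul_assoc]

theorem golub_klema_stewart_general {m n rr : ℕ} (hr : 1 ≤ rr) (hm : rr ≤ m) (hn : rr ≤ n)
    (A : Matrix (Fin m) (Fin n) ℝ)
    (U : Matrix (Fin m) (Fin m) ℝ) (hU : U ∈ Matrix.orthogonalGroup (Fin m) ℝ)
    (V : Matrix (Fin n) (Fin n) ℝ) (hV : V ∈ Matrix.orthogonalGroup (Fin n) ℝ)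
    (Sg : Matrix (Fin m) (Fin n) ℝ) (d : ℕ → ℝ)
    (hSVD : A = U * Sg * Vᵀ)
    (hSg : ∀ (i : Fin m) (j : Fin n), Sg i j = if (i : ℕ) = (j : ℕ) then d (i : ℕ) else 0)
    (hd_anti : ∀ i j : ℕ, i ≤ j → d j ≤ d i)
    (hd_pos : ∀ i : ℕ, i < rr → 0 < d i)
    (hd_zero : ∀ i : ℕ, rr ≤ i → d i = 0)
    (P : Matrix (Fin n) (Fin n) ℝ) (e : Equiv.Perm (Fin n)) (hP : P = e.permMatrix ℝ)
    (B₁ : Matrix (Fin m) (Fin rr) ℝ) (hB₁ : B₁ = (A * P).submatrix id (Fin.castLE hn))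
    (V₁₁ : Matrix (Fin rr) (Fin rr) ℝ)
    (hV₁₁ : V₁₁ = (Pᵀ * V).submatrix (Fin.castLE hn) (Fin.castLE hn))
    (hinv : IsUnit V₁₁) :
    d (rr - 1) / specNorm V₁₁⁻¹ ≤ minSingVal B₁ ∧
    minSingVal B₁ ≤ d (rr - 1) ∧
    B₁.rank = rr := by
  have : NeZero rr := ⟨by omega⟩
  have hQ := transpose_mul_self_mul_of_mem_orthogonalGroup hU (inclMatrix_transpose_mul_self hm)
  have hV₁₁t_contract : ∀ v, euclNorm (V₁₁ᵀ *ᵥ v) ≤ euclNorm v := by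
    have hW : (Pᵀ * V)ᵀ ∈ orthogonalGroup (Fin n) ℝ := by
      rw [transpose_mul, transpose_transpose, hP]
      exact mul_mem (Unitary.star_mem hV) (permMatrix_mem_orthogonalGroup e)
    rw [hV₁₁, transpose_submatrix]
    exact euclNorm_submatrix_castLE_mulVec_le hn hW
  have hV₁₁t_unit := (isUnit_transpose V₁₁).2 hinv
  rw [hB₁, hSVD, svd_submatrix_castLE_eq hm hn U Sg V P hSg hd_zero, ← hV₁₁,
    minSingVal_mul_of_transpose_mul_self hQ, rank_mul_of_transpose_mul_self hQ]
  refine ⟨?_, ?_, ?_⟩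
  · simpa only [← transpose_nonsing_inv, specNorm_transpose] using
      div_specNorm_inv_le_minSingVal_diagonal_mul (hd_pos (rr - 1) (by omega)).le
        (fun i : Fin rr => hd_anti _ _ (Nat.le_sub_one_of_lt i.2)) hV₁₁t_unit
  · exact (minSingVal_diagonal_mul_le hV₁₁t_unit hV₁₁t_contract ⟨rr - 1, by omega⟩).trans_eq
      (abs_of_pos (hd_pos (rr - 1) (by omega)))
  · rw [rank_of_isUnit _ ((isUnit_diagonal.2 (Pi.isUnit_iff.2 fun i => ?_)).mul hV₁₁t_unit),
      Fintype.card_fin]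
    exact (hd_pos _ i.2).ne'.isUnit

/-- Golub–Klema–Stewart bound: given an SVD `A = U * Sg * Vᵀ` of a rank-`rr` matrix `A`
(with singular values `d 0 ≥ d 1 ≥ …`, exactly the first `rr` of which are nonzero),
a permutation matrix `P`, the matrix `B₁` of the first `rr` columns of `A * P`, and the
top-left `rr × rr` block `V₁₁` of `Pᵀ * V`, assumed invertible, we have
`σ_rr(A) / ‖V₁₁⁻¹‖₂ ≤ σ_rr(B₁) ≤ σ_rr(A)`; in particular `B₁` has full column rank `rr`. -/
theorem golub_klema_stewart {m n rr : ℕ} (hr : 1 ≤ rr) (hm : rr ≤ m) (hn : rr ≤ n)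
    (A : Matrix (Fin m) (Fin n) ℝ) (hrank : A.rank = rr)
    (U : Matrix (Fin m) (Fin m) ℝ) (hU : U ∈ Matrix.orthogonalGroup (Fin m) ℝ)
    (V : Matrix (Fin n) (Fin n) ℝ) (hV : V ∈ Matrix.orthogonalGroup (Fin n) ℝ)
    (Sg : Matrix (Fin m) (Fin n) ℝ) (d : ℕ → ℝ)
    (hSVD : A = U * Sg * Vᵀ)
    (hSg : ∀ (i : Fin m) (j : Fin n), Sg i j = if (i : ℕ) = (j : ℕ) then d (i : ℕ) else 0)
    (hd_anti : ∀ i j : ℕ, i ≤ j → d j ≤ d i)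
    (hd_pos : ∀ i : ℕ, i < rr → 0 < d i)
    (hd_zero : ∀ i : ℕ, rr ≤ i → d i = 0)
    (P : Matrix (Fin n) (Fin n) ℝ) (e : Equiv.Perm (Fin n)) (hP : P = e.permMatrix ℝ)
    (B₁ : Matrix (Fin m) (Fin rr) ℝ) (hB₁ : B₁ = (A * P).submatrix id (Fin.castLE hn))
    (V₁₁ : Matrix (Fin rr) (Fin rr) ℝ)
    (hV₁₁ : V₁₁ = (Pᵀ * V).submatrix (Fin.castLE hn) (Fin.castLE hn))
    (hinv : IsUnit V₁₁) :
    d (rr - 1) / specNorm V₁₁⁻¹ ≤ minSingVal B₁ ∧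
    minSingVal B₁ ≤ d (rr - 1) ∧
    B₁.rank = rr :=
  golub_klema_stewart_general hr hm hn A U hU V hV Sg d hSVD hSg hd_anti hd_pos hd_zero P e hP B₁
    hB₁ V₁₁ hV₁₁ hinv
end
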